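/- arXiv:2105.08785 — 4 statements merged into one kernel-verified Lean document; each statement's English description precedes it below -/
import Mathlib

section
/- For a polynomial f in variables X = (X_1,...,X_n) and Y = (Y_1,...,Y_r) with deg_X f = d and deg_Y f = m, let f̄ be its homogenization with respect to the Y-variables (using a new variable Z). Then for all x̄_1, x̄_2 in the simplex Δ̃_n = {x ∈ ℝ^n : Σ x_i ≤ 1, x_i ≥ 0} and all (ȳ, z) ∈ C^r = {(y,z) ∈ ℝ^{r+1} : |y|^2 + z^2 = 1}, one has |f̄(x̄_1, ȳ, z) − f̄(x̄_2, ȳ, z)| ≤ (1/2)·√n·‖f‖_•·C(m+r, r)·d·(d+1)·‖x̄_1 − x̄_2‖, where ‖·‖ denotes the Euclidean norm on ℝ^n. -/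
open MvPolynomial

noncomputable def degX {n r : ℕ} (f : MvPolynomial (Fin n ⊕ Fin r) ℝ) : ℕ :=
  f.support.sup fun s => ∑ i, s (Sum.inl i)

noncomputable def degY {n r : ℕ} (f : MvPolynomial (Fin n ⊕ Fin r) ℝ) : ℕ :=
  f.support.sup fun s => ∑ j, s (Sum.inr j)

/-- Evaluation at `(x, y, z)` of the homogenization of `f` in the `Y`-variables. -/
noncomputable def homYval {n r : ℕ} (f : MvPolynomial (Fin n ⊕ Fin r) ℝ) (m : ℕ)
    (x : Fin n → ℝ) (y : Fin r → ℝ) (z : ℝ) : ℝ :=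
  ∑ s ∈ f.support, f.coeff s * (∏ i, x i ^ s (Sum.inl i)) * (∏ j, y j ^ s (Sum.inr j))
    * z ^ (m - ∑ j, s (Sum.inr j))

/-
Along the segment from `x₂` to `x₁` the mean value theorem reduces the claim to a bound on the
partial derivatives `∂f̄/∂xᵢ` on the simplex. On the sphere `|y^β z^k| ≤ 1`, so with
`|a_s| ≤ mult(α_s) B` it suffices to bound `Σ_s mult(α_s) ∂ᵢ x^{α_s}`. Monomials are told apart by
their pair of exponents `(α, β)`; there are at most `C(m+r, r)` values of `β`, and for each of them
the `α`'s of degree `k ≤ d` contribute at most `Σ_{|α| = k} mult(α) ∂ᵢ x^α = k (Σ x)^{k-1} ≤ k`,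
the `xᵢ`-derivative of the multinomial theorem. Hence `|∂f̄/∂xᵢ| ≤ B C(m+r, r) d(d+1)/2`, and
`‖x₁ - x₂‖₁ ≤ √n ‖x₁ - x₂‖₂` finishes the proof.
-/

open Finset Function Nat

lemma Nat.succ_mul_multinomial_update_succ {ι : Type*} [Fintype ι] [DecidableEq ι]
    (γ : ι → ℕ) (i : ι) :
    (γ i + 1) * Nat.multinomial univ (update γ i (γ i + 1)) =
      (∑ j, γ j + 1) * Nat.multinomial univ γ := by
  have hprod : ∏ j, (update γ i (γ i + 1) j)! = (γ i + 1) * ∏ j, (γ j)! := by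
    simp only [apply_update (fun _ k => k !), prod_update_of_mem (mem_univ i),
      prod_eq_mul_prod_sdiff_singleton_of_mem (mem_univ i) (fun j => (γ j)!), Nat.factorial_succ]
    ring
  have hsum : ∑ j, update γ i (γ i + 1) j = ∑ j, γ j + 1 := by
    rw [sum_update_of_mem (mem_univ i), sum_eq_add_sum_sdiff_singleton_of_mem (mem_univ i)]
    ring
  refine Nat.eq_of_mul_eq_mul_left (prod_pos fun j (_ : j ∈ univ) => (γ j).factorial_pos) ?_
  calc (∏ j, (γ j)!) * ((γ i + 1) * Nat.multinomial univ (update γ i (γ i + 1)))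
      = (∏ j, (update γ i (γ i + 1) j)!) * Nat.multinomial univ (update γ i (γ i + 1)) := by
        rw [hprod]; ring
    _ = (∑ j, γ j + 1)! := by rw [Nat.multinomial_spec, hsum]
    _ = (∏ j, (γ j)!) * ((∑ j, γ j + 1) * Nat.multinomial univ γ) := by
        rw [Nat.factorial_succ, ← Nat.multinomial_spec]; ring

lemma card_le_choose_of_sum_le {r m : ℕ} (T : Finset (Fin r → ℕ))
    (hT : ∀ β ∈ T, ∑ j, β j ≤ m) : #T ≤ (m + r).choose r := by
  set pad : (Fin r → ℕ) → Fin (r + 1) → ℕ := fun β => Fin.cons (m - ∑ j, β j) β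
  have hpad : Injective pad := fun β β' h => by simpa [pad] using congrArg Fin.tail h
  have hcard : #(piAntidiag (univ : Finset (Fin (r + 1))) m) = (m + r).choose r := by
    rw [← map_sym_eq_piAntidiag, card_map, sym_univ, Finset.card_univ, Sym.card_sym_eq_choose,
      Fintype.card_fin, show r + 1 + m - 1 = m + r by omega, Nat.choose_symm_add]
  calc #T = #(T.image pad) := (card_image_of_injective T hpad).symm
    _ ≤ #(piAntidiag (univ : Finset (Fin (r + 1))) m) := by
        refine card_le_card fun c hc => ?_
        obtain ⟨β, hβ, rfl⟩ := mem_image.1 hc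
        simpa [pad, Fin.sum_cons] using Nat.sub_add_cancel (hT β hβ)
    _ = (m + r).choose r := hcard

lemma sum_le_card_image_snd_nsmul_sum_image_fst {α β M : Type*} [DecidableEq α] [DecidableEq β]
    [AddCommMonoid M] [PartialOrder M] [IsOrderedAddMonoid M]
    (P : Finset (α × β)) {w : α → M} (hw : ∀ a, 0 ≤ w a) :
    ∑ p ∈ P, w p.1 ≤ #(P.image Prod.snd) • ∑ a ∈ P.image Prod.fst, w a := by
  calc ∑ p ∈ P, w p.1 ≤ ∑ p ∈ P.image Prod.fst ×ˢ P.image Prod.snd, w p.1 :=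
        sum_le_sum_of_subset_of_nonneg
          (fun p hp => mem_product.2 ⟨mem_image_of_mem _ hp, mem_image_of_mem _ hp⟩)
          fun _ _ _ => hw _
    _ = _ := by rw [sum_product_right]; exact sum_const (∑ a ∈ P.image Prod.fst, w a)

section MonomialDerivative

variable {ι R : Type*} [Fintype ι] [DecidableEq ι] [CommSemiring R]

/-- `∂(ξ ^ α)/∂ξᵢ`; the truncated subtraction `α i - 1` is harmless, the factor `α i` kills
the term when `α i = 0`. -/
def pderivProdPow (α : ι → ℕ) (i : ι) (ξ : ι → R) : R :=
  α i * ∏ j, ξ j ^ update α i (α i - 1) j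

lemma sum_piAntidiag_multinomial_mul_pderivProdPow (ξ : ι → R) (i : ι) (k : ℕ) :
    ∑ α ∈ piAntidiag univ k, (Nat.multinomial univ α : R) * pderivProdPow α i ξ =
      k * (∑ j, ξ j) ^ (k - 1) := by
  obtain _ | k := k
  · simp [pderivProdPow]
  set raise : (ι → ℕ) → ι → ℕ := fun γ => update γ i (γ i + 1)
  have hraise : Injective raise := fun γ γ' h => funext fun j => by
    have := congrFun h j
    by_cases hj : j = i
    · subst hj; simpa [raise] using this
    · simpa [raise, hj] using this
  have hmem : ∀ γ, γ ∈ piAntidiag univ k ↔ raise γ ∈ piAntidiag univ (k + 1) := by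
    intro γ
    simp only [mem_piAntidiag, raise, sum_update_of_mem (mem_univ i),
      sum_eq_add_sum_sdiff_singleton_of_mem (mem_univ i) γ, ne_eq, mem_univ, implies_true, and_true]
    omega
  have hzero : ∀ α ∈ piAntidiag univ (k + 1), α ∉ (piAntidiag univ k).image raise →
      (Nat.multinomial univ α : R) * pderivProdPow α i ξ = 0 := by
    intro α hα hnot
    suffices α i = 0 by simp [pderivProdPow, this]
    by_contra h
    refine hnot (mem_image.2 ⟨update α i (α i - 1), ?_, ?_⟩)
    · rw [hmem]; simpa [raise, Nat.sub_add_cancel (Nat.one_le_iff_ne_zero.2 h)] using hα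
    · simp [raise, Nat.sub_add_cancel (Nat.one_le_iff_ne_zero.2 h)]
  rw [← sum_subset (image_subset_iff.2 fun γ hγ => (hmem γ).1 hγ) hzero,
    sum_image hraise.injOn, sum_pow_eq_sum_piAntidiag, mul_sum]
  refine sum_congr rfl fun γ hγ => ?_
  have hmult := Nat.succ_mul_multinomial_update_succ γ i
  rw [(mem_piAntidiag.1 hγ).1, Nat.add_sub_cancel] at hmult
  simp only [pderivProdPow, raise, update_self, update_idem, Nat.add_sub_cancel, update_eq_self]
  rw [← mul_assoc, ← mul_assoc, ← Nat.cast_mul, mul_comm _ (γ i + 1), hmult]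
  push_cast
  ring

lemma hasDerivAt_prod_pow_add_smul (x v : ι → ℝ) (α : ι → ℕ) (t : ℝ) :
    HasDerivAt (fun t => ∏ j, (x + t • v) j ^ α j)
      (∑ i, pderivProdPow α i (x + t • v) * v i) t := by
  have hline : ∀ j, HasDerivAt (fun t => (x + t • v) j ^ α j)
      (α j * (x + t • v) j ^ (α j - 1) * v j) t := fun j => by
    simpa using ((hasDerivAt_id t).mul_const (v j)).const_add (x j) |>.fun_pow (α j)
  refine (HasDerivAt.fun_finsetProd fun j (_ : j ∈ univ) => hline j).congr_deriv
    (sum_congr rfl fun i _ => ?_)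
  have hupd : ∏ j, (x + t • v) j ^ update α i (α i - 1) j =
      (x + t • v) i ^ (α i - 1) * ∏ j ∈ univ.erase i, (x + t • v) j ^ α j := by
    rw [← mul_prod_erase univ _ (mem_univ i), update_self]
    exact congrArg _ (prod_congr rfl fun j hj => by rw [update_of_ne (ne_of_mem_erase hj)])
  rw [pderivProdPow, hupd, smul_eq_mul]
  ring

lemma pderivProdPow_nonneg {ξ : ι → ℝ} (hξ : ∀ j, 0 ≤ ξ j) (α : ι → ℕ) (i : ι) :
    0 ≤ pderivProdPow α i ξ :=
  mul_nonneg (Nat.cast_nonneg _) (prod_nonneg fun j _ => pow_nonneg (hξ j) _)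

lemma sum_multinomial_mul_pderivProdPow_le {ξ : ι → ℝ} (hξ0 : ∀ j, 0 ≤ ξ j)
    (hξ1 : ∑ j, ξ j ≤ 1) (i : ι) {d : ℕ} (S : Finset (ι → ℕ)) (hS : ∀ α ∈ S, ∑ j, α j ≤ d) :
    ∑ α ∈ S, (Nat.multinomial univ α : ℝ) * pderivProdPow α i ξ ≤ d * (d + 1) / 2 := by
  have hterm : ∀ α, 0 ≤ (Nat.multinomial univ α : ℝ) * pderivProdPow α i ξ := fun α =>
    mul_nonneg (Nat.cast_nonneg _) (pderivProdPow_nonneg hξ0 α i)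
  rw [← sum_fiberwise_of_maps_to (g := fun α => ∑ j, α j) (t := range (d + 1))
    fun α hα => mem_range_succ_iff.2 (hS α hα)]
  calc ∑ k ∈ range (d + 1), ∑ α ∈ S with ∑ j, α j = k,
        (Nat.multinomial univ α : ℝ) * pderivProdPow α i ξ
      ≤ ∑ k ∈ range (d + 1), ∑ α ∈ piAntidiag univ k,
          (Nat.multinomial univ α : ℝ) * pderivProdPow α i ξ := by
        refine sum_le_sum fun k _ => sum_le_sum_of_subset_of_nonneg (fun α hα => ?_)
          fun α _ _ => hterm α
        simpa using (mem_filter.1 hα).2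
    _ = ∑ k ∈ range (d + 1), (k : ℝ) * (∑ j, ξ j) ^ (k - 1) := by
        simp only [sum_piAntidiag_multinomial_mul_pderivProdPow]
    _ ≤ ∑ k ∈ range (d + 1), (k : ℝ) := by
        refine sum_le_sum fun k _ => mul_le_of_le_one_right (Nat.cast_nonneg k) ?_
        exact pow_le_one₀ (sum_nonneg fun j _ => hξ0 j) hξ1
    _ = d * (d + 1) / 2 := by
        have h := sum_range_id_mul_two (d + 1)
        rw [Nat.add_sub_cancel, Nat.mul_comm (d + 1)] at h
        rw [eq_div_iff two_ne_zero, ← Nat.cast_sum]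
        exact_mod_cast h

end MonomialDerivative

/-- The paper's `Δ̃ₙ`. -/
def solidSimplex (ι : Type*) [Fintype ι] : Set (ι → ℝ) :=
  {x | (∀ i, 0 ≤ x i) ∧ ∑ i, x i ≤ 1}

lemma convex_solidSimplex (ι : Type*) [Fintype ι] : Convex ℝ (solidSimplex ι) := by
  rintro x ⟨hx0, hx1⟩ y ⟨hy0, hy1⟩ a b ha hb hab
  refine ⟨fun i => ?_, ?_⟩
  · simp only [Pi.add_apply, Pi.smul_apply, smul_eq_mul]
    exact add_nonneg (mul_nonneg ha (hx0 i)) (mul_nonneg hb (hy0 i))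
  · simp only [Pi.add_apply, Pi.smul_apply, smul_eq_mul, sum_add_distrib, ← mul_sum]
    nlinarith

lemma abs_prod_pow_mul_pow_le_one {ι : Type*} [Fintype ι] {y : ι → ℝ} {z : ℝ}
    (hyz : ∑ j, y j ^ 2 + z ^ 2 = 1) (β : ι → ℕ) (k : ℕ) :
    |(∏ j, y j ^ β j) * z ^ k| ≤ 1 := by
  have hsq : ∀ j, y j ^ 2 ≤ 1 := fun j => by
    nlinarith [single_le_sum (fun j _ => sq_nonneg (y j)) (mem_univ j), sq_nonneg z]
  have hz : z ^ 2 ≤ 1 := by nlinarith [sum_nonneg fun j (_ : j ∈ univ) => sq_nonneg (y j)]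
  rw [abs_mul, abs_prod]
  refine mul_le_one₀ (prod_le_one (fun _ _ => abs_nonneg _) fun j _ => ?_) (abs_nonneg _) ?_
  · rw [abs_pow]; exact pow_le_one₀ (abs_nonneg _) (sq_le_one_iff_abs_le_one _ |>.1 (hsq j))
  · rw [abs_pow]; exact pow_le_one₀ (abs_nonneg _) (sq_le_one_iff_abs_le_one _ |>.1 hz)

lemma sum_abs_le_sqrt_card_mul_sqrt_sum_sq {ι : Type*} [Fintype ι] (v : ι → ℝ) :
    ∑ i, |v i| ≤ √(Fintype.card ι) * √(∑ i, v i ^ 2) := by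
  rw [← Real.sqrt_mul (Nat.cast_nonneg _)]
  refine Real.le_sqrt_of_sq_le ?_
  simpa [sq_abs] using sq_sum_le_card_mul_sum_sq (s := univ) (f := fun i => |v i|)

noncomputable def homYvalPDerivX {n r : ℕ} (f : MvPolynomial (Fin n ⊕ Fin r) ℝ) (m : ℕ)
    (i : Fin n) (x : Fin n → ℝ) (y : Fin r → ℝ) (z : ℝ) : ℝ :=
  ∑ s ∈ f.support, f.coeff s * pderivProdPow (fun j => s (Sum.inl j)) i x *
    (∏ j, y j ^ s (Sum.inr j)) * z ^ (m - ∑ j, s (Sum.inr j))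

lemma hasDerivAt_homYval_add_smul {n r : ℕ} (f : MvPolynomial (Fin n ⊕ Fin r) ℝ) (m : ℕ)
    (x v : Fin n → ℝ) (y : Fin r → ℝ) (z t : ℝ) :
    HasDerivAt (fun t => homYval f m (x + t • v) y z)
      (∑ i, homYvalPDerivX f m i (x + t • v) y z * v i) t := by
  have hterm := fun s : (Fin n ⊕ Fin r) →₀ ℕ =>
    (((hasDerivAt_prod_pow_add_smul x v (fun j => s (Sum.inl j)) t).const_mul
      (f.coeff s)).mul_const (∏ j, y j ^ s (Sum.inr j))).mul_const (z ^ (m - ∑ j, s (Sum.inr j)))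
  refine (HasDerivAt.fun_sum fun s (_ : s ∈ f.support) => hterm s).congr_deriv ?_
  simp only [homYvalPDerivX, sum_mul, mul_sum]
  rw [sum_comm]
  refine sum_congr rfl fun s _ => sum_congr rfl fun i _ => ?_
  ring

section Homogenization

variable {n r : ℕ} {f : MvPolynomial (Fin n ⊕ Fin r) ℝ} {d m : ℕ} {B : ℝ}

lemma nonneg_of_abs_coeff_le_multinomial_mul (hB : ∀ s ∈ f.support,
      |f.coeff s| ≤ (Nat.multinomial Finset.univ fun i => s (Sum.inl i) : ℕ) * B)
    (hf : f ≠ 0) : 0 ≤ B := by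
  obtain ⟨s, hs⟩ := support_nonempty.2 hf
  have hpos : (0 : ℝ) < Nat.multinomial univ fun i => s (Sum.inl i) :=
    Nat.cast_pos.2 (Nat.multinomial_pos _ _)
  exact nonneg_of_mul_nonneg_right ((abs_nonneg _).trans (hB s hs)) hpos

lemma sum_support_multinomial_mul_pderivProdPow_le (hd : degX f ≤ d) (hm : degY f ≤ m)
    {x : Fin n → ℝ} (hx : x ∈ solidSimplex (Fin n)) (i : Fin n) :
    ∑ s ∈ f.support, (Nat.multinomial univ (fun j => s (Sum.inl j)) : ℝ) *
        pderivProdPow (fun j => s (Sum.inl j)) i x ≤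
      (m + r).choose r * (d * (d + 1) / 2) := by
  set split : ((Fin n ⊕ Fin r) →₀ ℕ) → (Fin n → ℕ) × (Fin r → ℕ) :=
    fun s => (fun j => s (Sum.inl j), fun j => s (Sum.inr j))
  have hsplit : Injective split := fun s s' h => by
    ext (j | j)
    · exact congrFun (congrArg Prod.fst h) j
    · exact congrFun (congrArg Prod.snd h) j
  set P := f.support.image split
  have hcard : #(P.image Prod.snd) ≤ (m + r).choose r := by
    refine card_le_choose_of_sum_le _ fun β hβ => ?_
    simp only [P, image_image, mem_image] at hβ
    obtain ⟨s, hs, rfl⟩ := hβ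
    exact (le_sup (f := fun s => ∑ j, s (Sum.inr j)) hs).trans hm
  have hdeg : ∀ α ∈ P.image Prod.fst, ∑ j, α j ≤ d := fun α hα => by
    simp only [P, image_image, mem_image] at hα
    obtain ⟨s, hs, rfl⟩ := hα
    exact (le_sup (f := fun s => ∑ j, s (Sum.inl j)) hs).trans hd
  calc ∑ s ∈ f.support, (Nat.multinomial univ (fun j => s (Sum.inl j)) : ℝ) *
        pderivProdPow (fun j => s (Sum.inl j)) i x
      = ∑ p ∈ P, (Nat.multinomial univ p.1 : ℝ) * pderivProdPow p.1 i x := by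
        rw [sum_image hsplit.injOn]
    _ ≤ #(P.image Prod.snd) • ∑ α ∈ P.image Prod.fst,
          (Nat.multinomial univ α : ℝ) * pderivProdPow α i x :=
        sum_le_card_image_snd_nsmul_sum_image_fst P fun α =>
          mul_nonneg (Nat.cast_nonneg _) (pderivProdPow_nonneg hx.1 α i)
    _ ≤ (m + r).choose r * (d * (d + 1) / 2) := by
        rw [nsmul_eq_mul]
        exact mul_le_mul (by exact_mod_cast hcard)
          (sum_multinomial_mul_pderivProdPow_le hx.1 hx.2 i _ hdeg)
          (sum_nonneg fun α _ => mul_nonneg (Nat.cast_nonneg _) (pderivProdPow_nonneg hx.1 α i))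
          (Nat.cast_nonneg _)

lemma abs_homYvalPDerivX_le (hB : ∀ s ∈ f.support,
      |f.coeff s| ≤ (Nat.multinomial Finset.univ fun i => s (Sum.inl i) : ℕ) * B)
    (hB0 : 0 ≤ B) (hd : degX f ≤ d) (hm : degY f ≤ m)
    {x : Fin n → ℝ} (hx : x ∈ solidSimplex (Fin n)) {y : Fin r → ℝ} {z : ℝ}
    (hyz : ∑ j, y j ^ 2 + z ^ 2 = 1) (i : Fin n) :
    |homYvalPDerivX f m i x y z| ≤ B * ((m + r).choose r * (d * (d + 1) / 2)) := by
  refine (abs_sum_le_sum_abs _ _).trans ?_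
  calc ∑ s ∈ f.support, |f.coeff s * pderivProdPow (fun j => s (Sum.inl j)) i x *
        (∏ j, y j ^ s (Sum.inr j)) * z ^ (m - ∑ j, s (Sum.inr j))|
      ≤ ∑ s ∈ f.support, B * ((Nat.multinomial univ (fun j => s (Sum.inl j)) : ℝ) *
          pderivProdPow (fun j => s (Sum.inl j)) i x) := by
        refine sum_le_sum fun s hs => ?_
        have hp := pderivProdPow_nonneg hx.1 (fun j => s (Sum.inl j)) i
        rw [mul_assoc, abs_mul, abs_mul, abs_of_nonneg hp]
        calc |f.coeff s| * pderivProdPow (fun j => s (Sum.inl j)) i x *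
              |(∏ j, y j ^ s (Sum.inr j)) * z ^ (m - ∑ j, s (Sum.inr j))|
            ≤ (Nat.multinomial univ (fun j => s (Sum.inl j)) * B) *
                pderivProdPow (fun j => s (Sum.inl j)) i x * 1 := by
              gcongr
              · exact hB s hs
              · exact abs_prod_pow_mul_pow_le_one hyz _ _
          _ = _ := by ring
    _ ≤ B * ((m + r).choose r * (d * (d + 1) / 2)) := by
        rw [← mul_sum]
        exact mul_le_mul_of_nonneg_left
          (sum_support_multinomial_mul_pderivProdPow_le hd hm hx i) hB0

lemma abs_homYval_sub_le (hB : ∀ s ∈ f.support,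
      |f.coeff s| ≤ (Nat.multinomial Finset.univ fun i => s (Sum.inl i) : ℕ) * B)
    (hB0 : 0 ≤ B) (hd : degX f ≤ d) (hm : degY f ≤ m)
    {x₁ x₂ : Fin n → ℝ} (hx₁ : x₁ ∈ solidSimplex (Fin n)) (hx₂ : x₂ ∈ solidSimplex (Fin n))
    {y : Fin r → ℝ} {z : ℝ} (hyz : ∑ j, y j ^ 2 + z ^ 2 = 1) :
    |homYval f m x₁ y z - homYval f m x₂ y z| ≤
      B * ((m + r).choose r * (d * (d + 1) / 2)) * ∑ i, |x₁ i - x₂ i| := by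
  set K := B * ((m + r).choose r * (d * (d + 1) / 2))
  set line : ℝ → Fin n → ℝ := fun t => x₂ + t • (x₁ - x₂)
  have hderiv : ∀ t ∈ Set.Icc (0 : ℝ) 1, ‖∑ i, homYvalPDerivX f m i (line t) y z * (x₁ - x₂) i‖
      ≤ K * ∑ i, |x₁ i - x₂ i| := fun t ht => by
    have hmem : line t ∈ solidSimplex (Fin n) := (convex_solidSimplex _).add_smul_sub_mem hx₂ hx₁ ht
    rw [Real.norm_eq_abs, mul_sum]
    refine (abs_sum_le_sum_abs _ _).trans (sum_le_sum fun i _ => ?_)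
    rw [abs_mul]
    exact mul_le_mul_of_nonneg_right (abs_homYvalPDerivX_le hB hB0 hd hm hmem hyz i)
      (abs_nonneg _)
  have hmvt := (convex_Icc (0 : ℝ) 1).norm_image_sub_le_of_norm_hasDerivWithin_le
    (fun t _ => (hasDerivAt_homYval_add_smul f m x₂ (x₁ - x₂) y z t).hasDerivWithinAt) hderiv
    (Set.left_mem_Icc.2 zero_le_one) (Set.right_mem_Icc.2 zero_le_one)
  simpa [line] using hmvt

end Homogenization

/-- Lipschitz-type estimate for `f̄` in the `x`-variable on the simplex:
`|f̄(x₁,y,z) − f̄(x₂,y,z)| ≤ (1/2)·√n·‖f‖_•·C(m+r,r)·d·(d+1)·‖x₁ − x₂‖`. -/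
theorem stmt1 {n r : ℕ} (f : MvPolynomial (Fin n ⊕ Fin r) ℝ) (d m : ℕ) (B : ℝ)
    (hd : degX f = d) (hm : degY f = m)
    (hB : ∀ s ∈ f.support,
      |f.coeff s| ≤ (Nat.multinomial Finset.univ fun i => s (Sum.inl i) : ℕ) * B)
    (x₁ x₂ : Fin n → ℝ)
    (hx₁ : (∀ i, 0 ≤ x₁ i) ∧ ∑ i, x₁ i ≤ 1) (hx₂ : (∀ i, 0 ≤ x₂ i) ∧ ∑ i, x₂ i ≤ 1)
    (y : Fin r → ℝ) (z : ℝ) (hyz : (∑ j, y j ^ 2) + z ^ 2 = 1) :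
    |homYval f m x₁ y z - homYval f m x₂ y z| ≤
      (1 / 2) * Real.sqrt n * B * (Nat.choose (m + r) r) * d * (d + 1) *
        Real.sqrt (∑ i, (x₁ i - x₂ i) ^ 2) := by
  obtain rfl | hf := eq_or_ne f 0
  · obtain rfl : 0 = d := by simpa [degX] using hd
    simp [homYval]
  have hB0 := nonneg_of_abs_coeff_le_multinomial_mul hB hf
  calc |homYval f m x₁ y z - homYval f m x₂ y z|
      ≤ B * ((m + r).choose r * (d * (d + 1) / 2)) * ∑ i, |x₁ i - x₂ i| :=
        abs_homYval_sub_le hB hB0 hd.le hm.le hx₁ hx₂ hyz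
    _ ≤ B * ((m + r).choose r * (d * (d + 1) / 2)) * (√n * √(∑ i, (x₁ i - x₂ i) ^ 2)) := by
        gcongr
        simpa using sum_abs_le_sqrt_card_mul_sqrt_sum_sq (x₁ - x₂)
    _ = _ := by ring
end

section
/- Let f ∈ ℝ[X_1,...,X_n, Y_1,...,Y_r] with deg_Y f = m even, and suppose f is positive on S × ℝ^r for a set S ⊆ ℝ^n, and f satisfies condition (†) on S (the top Y-degree part of f specialized at each x ∈ S is a positive definite m-form in r variables). Then the homogenization f̄ of f with respect to the Y-variables (with homogenizing variable Z) is positive on S × C^r, where C^r = {(ȳ, z) ∈ ℝ^{r+1} : y_1^2+...+y_r^2+z^2 = 1}. -/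
open MvPolynomial

/-- Evaluation of the top `Y`-degree-`m` part of `f`: `Σ_{|β|=m} f_β(x) y^β`. -/
noncomputable def topYval {n r : ℕ} (f : MvPolynomial (Fin n ⊕ Fin r) ℝ) (m : ℕ)
    (x : Fin n → ℝ) (y : Fin r → ℝ) : ℝ :=
  ∑ s ∈ f.support.filter (fun s => (∑ j, s (Sum.inr j)) = m),
    f.coeff s * (∏ i, x i ^ s (Sum.inl i)) * (∏ j, y j ^ s (Sum.inr j))

/-- if `f` is positive on `S × ℝ^r`, `deg_Y f = m` is even, and `f` satisfies
condition (†) on `S`, then the homogenization `f̄` is positive on `S × C^r`. -/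
theorem stmt2 {n r : ℕ} (f : MvPolynomial (Fin n ⊕ Fin r) ℝ) (m : ℕ)
    (hm : degY f = m) (hmeven : Even m) (S : Set (Fin n → ℝ))
    (hpos : ∀ x ∈ S, ∀ y : Fin r → ℝ, 0 < eval (Sum.elim x y) f)
    (hdag : ∀ x ∈ S, ∀ y : Fin r → ℝ, y ≠ 0 → 0 < topYval f m x y) :
    ∀ x ∈ S, ∀ (y : Fin r → ℝ) (z : ℝ), (∑ j, y j ^ 2) + z ^ 2 = 1 →
      0 < homYval f m x y z := by
  intro x hx y z hsph
  have hsupp : ∀ s ∈ f.support, (∑ j, s (Sum.inr j)) ≤ m := by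
    intro s hs
    rw [← hm]
    exact Finset.le_sup (f := fun s => ∑ j, s (Sum.inr j)) hs
  by_cases hz : z = 0
  · subst hz
    have hy : y ≠ 0 := by
      intro h
      subst h
      simp at hsph
    have hEq : homYval f m x y 0 = topYval f m x y := by
      rw [topYval, Finset.sum_filter, homYval]
      apply Finset.sum_congr rfl
      intro s hs
      by_cases h : (∑ j, s (Sum.inr j)) = m
      · simp [h, Nat.sub_self]
      · have hlt : 0 < m - ∑ j, s (Sum.inr j) :=
          Nat.sub_pos_of_lt (lt_of_le_of_ne (hsupp s hs) h)
        simp [h, zero_pow hlt.ne']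
    rw [hEq]
    exact hdag x hx y hy
  · have key : homYval f m x y z = z ^ m * eval (Sum.elim x fun j => y j / z) f := by
      rw [eval_eq', Finset.mul_sum, homYval]
      apply Finset.sum_congr rfl
      intro s hs
      rw [Fintype.prod_sum_type]
      simp only [Sum.elim_inl, Sum.elim_inr, div_pow]
      rw [Finset.prod_div_distrib, Finset.prod_pow_eq_pow_sum]
      have hle := hsupp s hs
      rw [pow_sub₀ z hz hle]
      field_simp
    rw [key]
    exact mul_pos (hmeven.pow_pos hz) (hpos x hx _)
end

section
/- Let f ∈ ℝ[X_1,...,X_n, Y_1, Y_{21},...,Y_{2r}] with deg_{Y_1} f = m even and deg in the Y_2-variables equal to 2. If f is positive on S × ℝ^{r+1} and f satisfies condition (‡) on S, then the bihomogenization f̿ of f with respect to Y_1 (with variable Z_1) and to the Y_2-variables (with variable Z_2), separately, is positive on S × C × C^r, where C = {(y,z) ∈ ℝ^2 : y^2 + z^2 = 1} and C^r = {(ȳ,z) ∈ ℝ^{r+1} : |ȳ|^2 + z^2 = 1}. -/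
open MvPolynomial

/-- Variables: `X` via `Sum.inl`, `Y₁` via `Sum.inr (Sum.inl ())`, `Y₂` via `Sum.inr (Sum.inr j)`. -/
abbrev σvars (n r : ℕ) := Fin n ⊕ (Unit ⊕ Fin r)

noncomputable def degY1 {n r : ℕ} (f : MvPolynomial (σvars n r) ℝ) : ℕ :=
  f.support.sup fun s => s (Sum.inr (Sum.inl ()))

noncomputable def degY2 {n r : ℕ} (f : MvPolynomial (σvars n r) ℝ) : ℕ :=
  f.support.sup fun s => ∑ j, s (Sum.inr (Sum.inr j))

/-- Evaluation of the bihomogenization `f̿ = Σ f_{i,β}(X) Y₁^i Z₁^{m-i} Y₂^β Z₂^{2-|β|}`. -/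
noncomputable def bihomval {n r : ℕ} (f : MvPolynomial (σvars n r) ℝ) (m : ℕ)
    (x : Fin n → ℝ) (y₁ z₁ : ℝ) (y₂ : Fin r → ℝ) (z₂ : ℝ) : ℝ :=
  ∑ s ∈ f.support, f.coeff s * (∏ i, x i ^ s (Sum.inl i))
    * y₁ ^ s (Sum.inr (Sum.inl ())) * z₁ ^ (m - s (Sum.inr (Sum.inl ())))
    * (∏ j, y₂ j ^ s (Sum.inr (Sum.inr j))) * z₂ ^ (2 - ∑ j, s (Sum.inr (Sum.inr j)))

/-- `Σ_{|β|≤2} f_{m,β}(x) y₂^β`  (the coefficient of `Y₁^m`). -/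
noncomputable def topY1val {n r : ℕ} (f : MvPolynomial (σvars n r) ℝ) (m : ℕ)
    (x : Fin n → ℝ) (y₂ : Fin r → ℝ) : ℝ :=
  ∑ s ∈ f.support.filter (fun s => s (Sum.inr (Sum.inl ())) = m),
    f.coeff s * (∏ i, x i ^ s (Sum.inl i)) * (∏ j, y₂ j ^ s (Sum.inr (Sum.inr j)))

/-- `Σ_{|β|=2} f_{m,β}(x) y₂^β`. -/
noncomputable def topY1Y2val {n r : ℕ} (f : MvPolynomial (σvars n r) ℝ) (m : ℕ)
    (x : Fin n → ℝ) (y₂ : Fin r → ℝ) : ℝ :=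
  ∑ s ∈ f.support.filter
      (fun s => s (Sum.inr (Sum.inl ())) = m ∧ (∑ j, s (Sum.inr (Sum.inr j))) = 2),
    f.coeff s * (∏ i, x i ^ s (Sum.inl i)) * (∏ j, y₂ j ^ s (Sum.inr (Sum.inr j)))

/-- `Σ_{0≤i≤m} Σ_{|β|=2} f_{i,β}(x) y₁^i y₂^β`. -/
noncomputable def topY2val {n r : ℕ} (f : MvPolynomial (σvars n r) ℝ)
    (x : Fin n → ℝ) (y₁ : ℝ) (y₂ : Fin r → ℝ) : ℝ :=
  ∑ s ∈ f.support.filter (fun s => (∑ j, s (Sum.inr (Sum.inr j))) = 2),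
    f.coeff s * (∏ i, x i ^ s (Sum.inl i)) * y₁ ^ s (Sum.inr (Sum.inl ()))
      * (∏ j, y₂ j ^ s (Sum.inr (Sum.inr j)))

open Finset

/-!
Away from `z₁ = 0` and `z₂ = 0`, dehomogenizing gives
`f̿(x, y₁, z₁, y₂, z₂) = z₁^m z₂^2 f(x, y₁/z₁, y₂/z₂)`, which is positive because `m` is even.
On `z₁ = 0` (where `y₁^m = 1`) only the monomials of `Y₁`-degree `m` survive, on `z₂ = 0` only
those of `Y₂`-degree `2`, and the three parts of (‡) are exactly the positivity of what is left
in these three degenerate cases.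
-/

section Homogenization

variable {K : Type*} [Field K]

lemma pow_mul_pow_sub_eq_pow_mul_div_pow {y z : K} {k d : ℕ} (hz : z ≠ 0) (hk : k ≤ d) :
    y ^ k * z ^ (d - k) = z ^ d * (y / z) ^ k := by
  rw [div_pow, pow_sub₀ z hz hk]
  field_simp

lemma prod_pow_mul_pow_sub_eq_pow_mul_prod_div_pow {ι : Type*} [Fintype ι] (y : ι → K)
    (β : ι → ℕ) {z : K} {d : ℕ} (hz : z ≠ 0) (hβ : ∑ j, β j ≤ d) :
    (∏ j, y j ^ β j) * z ^ (d - ∑ j, β j) = z ^ d * ∏ j, (y j / z) ^ β j := by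
  simp only [div_pow]
  rw [prod_div_distrib, prod_pow_eq_pow_sum, pow_sub₀ z hz hβ]
  field_simp

lemma zero_pow_sub_eq_ite {M₀ : Type*} [MonoidWithZero M₀] {k d : ℕ} (hk : k ≤ d) :
    (0 : M₀) ^ (d - k) = if k = d then 1 else 0 := by
  simp only [zero_pow_eq, Nat.sub_eq_zero_iff_le, hk.ge_iff_eq]

end Homogenization

section Bihomogenization

variable {n r : ℕ} {f : MvPolynomial (σvars n r) ℝ} {m : ℕ} {x : Fin n → ℝ} {y₁ z₁ z₂ : ℝ}
  {y₂ : Fin r → ℝ}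

lemma le_degY1 {s : σvars n r →₀ ℕ} (hs : s ∈ f.support) : s (Sum.inr (Sum.inl ())) ≤ degY1 f :=
  le_sup (f := fun s => s (Sum.inr (Sum.inl ()))) hs

lemma le_degY2 {s : σvars n r →₀ ℕ} (hs : s ∈ f.support) :
    ∑ j, s (Sum.inr (Sum.inr j)) ≤ degY2 f :=
  le_sup (f := fun s => ∑ j, s (Sum.inr (Sum.inr j))) hs

lemma eval_sumElim_eq_sum (f : MvPolynomial (σvars n r) ℝ) (x : Fin n → ℝ) (y₁ : ℝ)
    (y₂ : Fin r → ℝ) :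
    eval (Sum.elim x (Sum.elim (fun _ => y₁) y₂)) f
      = ∑ s ∈ f.support, f.coeff s * (∏ i, x i ^ s (Sum.inl i))
          * y₁ ^ s (Sum.inr (Sum.inl ())) * ∏ j, y₂ j ^ s (Sum.inr (Sum.inr j)) := by
  rw [eval_eq']
  refine sum_congr rfl fun s _ => ?_
  simp only [Fintype.prod_sum_type, Sum.elim_inl, Sum.elim_inr, univ_unique, prod_singleton]
  ring

lemma bihomval_eq_mul_eval (h₁ : degY1 f ≤ m) (h₂ : degY2 f ≤ 2) (hz₁ : z₁ ≠ 0) (hz₂ : z₂ ≠ 0) :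
    bihomval f m x y₁ z₁ y₂ z₂ = z₁ ^ m * z₂ ^ 2 *
      eval (Sum.elim x (Sum.elim (fun _ => y₁ / z₁) (fun j => y₂ j / z₂))) f := by
  rw [eval_sumElim_eq_sum, bihomval, mul_sum]
  refine sum_congr rfl fun s hs => ?_
  have e₁ := pow_mul_pow_sub_eq_pow_mul_div_pow (y := y₁) hz₁ ((le_degY1 hs).trans h₁)
  have e₂ := prod_pow_mul_pow_sub_eq_pow_mul_prod_div_pow y₂ _ hz₂ ((le_degY2 hs).trans h₂)
  linear_combination
    (f.coeff s * (∏ i, x i ^ s (Sum.inl i)) * (∏ j, y₂ j ^ s (Sum.inr (Sum.inr j)))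
        * z₂ ^ (2 - ∑ j, s (Sum.inr (Sum.inr j)))) * e₁
      + (f.coeff s * (∏ i, x i ^ s (Sum.inl i)) * z₁ ^ m
        * (y₁ / z₁) ^ s (Sum.inr (Sum.inl ()))) * e₂

lemma bihomval_zero_left (h₁ : degY1 f ≤ m) (h₂ : degY2 f ≤ 2) (hy₁ : y₁ ^ m = 1)
    (hz₂ : z₂ ≠ 0) :
    bihomval f m x y₁ 0 y₂ z₂ = z₂ ^ 2 * topY1val f m x (fun j => y₂ j / z₂) := by
  rw [bihomval, topY1val, mul_sum, sum_filter]
  refine sum_congr rfl fun s hs => ?_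
  rw [zero_pow_sub_eq_ite ((le_degY1 hs).trans h₁)]
  split_ifs with hdeg
  · have e₂ := prod_pow_mul_pow_sub_eq_pow_mul_prod_div_pow y₂ _ hz₂ ((le_degY2 hs).trans h₂)
    rw [hdeg, hy₁]
    linear_combination (f.coeff s * ∏ i, x i ^ s (Sum.inl i)) * e₂
  · simp

lemma bihomval_zero_right (h₁ : degY1 f ≤ m) (h₂ : degY2 f ≤ 2) (hz₁ : z₁ ≠ 0) :
    bihomval f m x y₁ z₁ y₂ 0 = z₁ ^ m * topY2val f x (y₁ / z₁) y₂ := by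
  rw [bihomval, topY2val, mul_sum, sum_filter]
  refine sum_congr rfl fun s hs => ?_
  rw [zero_pow_sub_eq_ite ((le_degY2 hs).trans h₂)]
  split_ifs
  · have e₁ := pow_mul_pow_sub_eq_pow_mul_div_pow (y := y₁) hz₁ ((le_degY1 hs).trans h₁)
    linear_combination (f.coeff s * (∏ i, x i ^ s (Sum.inl i))
      * ∏ j, y₂ j ^ s (Sum.inr (Sum.inr j))) * e₁
  · simp

lemma bihomval_zero_zero (h₁ : degY1 f ≤ m) (h₂ : degY2 f ≤ 2) (hy₁ : y₁ ^ m = 1) :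
    bihomval f m x y₁ 0 y₂ 0 = topY1Y2val f m x y₂ := by
  rw [bihomval, topY1Y2val, sum_filter]
  refine sum_congr rfl fun s hs => ?_
  rw [zero_pow_sub_eq_ite ((le_degY1 hs).trans h₁), zero_pow_sub_eq_ite ((le_degY2 hs).trans h₂)]
  split_ifs <;> simp_all

end Bihomogenization

lemma pow_eq_one_of_sq_add_zero_sq {y : ℝ} {m : ℕ} (hm : Even m) (h : y ^ 2 + 0 ^ 2 = 1) :
    y ^ m = 1 := by
  obtain ⟨k, rfl⟩ := hm
  rw [zero_pow two_ne_zero, add_zero] at h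
  rw [← two_mul, pow_mul, h, one_pow]

lemma ne_zero_of_sum_sq_add_zero_sq {r : ℕ} {y : Fin r → ℝ} (h : ∑ j, y j ^ 2 + 0 ^ 2 = 1) :
    y ≠ 0 := by
  rintro rfl
  simp at h

/-- if `f` is positive on `S × ℝ^{r+1}`, `deg_{Y₁} f = m` even, `deg_{Y₂} f = 2`,
and `f` satisfies condition (‡) on `S`, then `f̿` is positive on `S × C × C^r`. -/
theorem stmt3 {n r : ℕ} (f : MvPolynomial (σvars n r) ℝ) (m : ℕ)
    (hm : degY1 f = m) (hmeven : Even m) (h2 : degY2 f = 2) (S : Set (Fin n → ℝ))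
    (hpos : ∀ x ∈ S, ∀ (y₁ : ℝ) (y₂ : Fin r → ℝ),
      0 < eval (Sum.elim x (Sum.elim (fun _ => y₁) y₂)) f)
    (hddag₁ : ∀ x ∈ S, ∀ y₂ : Fin r → ℝ, 0 < topY1val f m x y₂)
    (hddag₂ : ∀ x ∈ S, ∀ y₂ : Fin r → ℝ, y₂ ≠ 0 → 0 < topY1Y2val f m x y₂)
    (hddag₃ : ∀ x ∈ S, ∀ y₁ : ℝ, ∀ y₂ : Fin r → ℝ, y₂ ≠ 0 → 0 < topY2val f x y₁ y₂) :
    ∀ x ∈ S, ∀ (y₁ z₁ : ℝ), y₁ ^ 2 + z₁ ^ 2 = 1 →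
      ∀ (y₂ : Fin r → ℝ) (z₂ : ℝ), (∑ j, y₂ j ^ 2) + z₂ ^ 2 = 1 →
        0 < bihomval f m x y₁ z₁ y₂ z₂ := by
  intro x hx y₁ z₁ hc₁ y₂ z₂ hc₂
  rcases eq_or_ne z₁ 0 with rfl | hz₁ <;> rcases eq_or_ne z₂ 0 with rfl | hz₂
  · rw [bihomval_zero_zero hm.le h2.le (pow_eq_one_of_sq_add_zero_sq hmeven hc₁)]
    exact hddag₂ x hx y₂ (ne_zero_of_sum_sq_add_zero_sq hc₂)
  · rw [bihomval_zero_left hm.le h2.le (pow_eq_one_of_sq_add_zero_sq hmeven hc₁) hz₂]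
    exact mul_pos (by positivity) (hddag₁ x hx _)
  · rw [bihomval_zero_right hm.le h2.le hz₁]
    exact mul_pos (hmeven.pow_pos hz₁) (hddag₃ x hx _ y₂ (ne_zero_of_sum_sq_add_zero_sq hc₂))
  · rw [bihomval_eq_mul_eval hm.le h2.le hz₁ hz₂]
    exact mul_pos (mul_pos (hmeven.pow_pos hz₁) (by positivity)) (hpos x hx _ _)
end

section
/- Let g_1,...,g_s ∈ ℝ[X_1,...,X_n] with S = {x : g_i(x) ≥ 0 ∀i} nonempty and contained in the interior of the simplex Δ̃_n, M(g_1,...,g_s) archimedean, and |g_i| ≤ 1 on Δ̃_n for all i. Let f ∈ ℝ[X, Y_1, Y_2] be positive on S × ℝ^2 with deg_{(Y_1,Y_2)} f = 4, satisfying condition (†) on S, and with f^• = min{f̄(x, y_1, y_2, z) : x ∈ S, (y_1,y_2,z) ∈ C^2} > 0. Then there exist λ > 0 and k ∈ ℕ_0 such that h = f̄ − λ(Y_1^2 + Y_2^2 + Z^2)^2 Σ_{i=1}^s g_i(g_i − 1)^{2k} satisfies h(x, y_1, y_2, z) ≥ f^•/2 for all x ∈ Δ̃_n and (y_1, y_2,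 z) ∈ C^2. -/
set_option maxHeartbeats 1000000


open MvPolynomial

def IsSOS {σ : Type*} (p : MvPolynomial σ ℝ) : Prop :=
  ∃ (k : ℕ) (q : Fin k → MvPolynomial σ ℝ), p = ∑ i, q i ^ 2

def InQM {σ : Type*} {s : ℕ} (g : Fin s → MvPolynomial σ ℝ) (p : MvPolynomial σ ℝ) : Prop :=
  ∃ (σ₀ : MvPolynomial σ ℝ) (σs : Fin s → MvPolynomial σ ℝ),
    IsSOS σ₀ ∧ (∀ i, IsSOS (σs i)) ∧ p = σ₀ + ∑ i, σs i * g i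

/-- The simplex `Δ̃_n`. -/
def simplexSet (n : ℕ) : Set (Fin n → ℝ) := {x | (∀ i, 0 ≤ x i) ∧ ∑ i, x i ≤ 1}

/-- `t (1-t)^m (m+1) ≤ 1` for `t ∈ [0,1]`. -/
lemma aux_t_bound (m : ℕ) {t : ℝ} (h0 : 0 ≤ t) (h1 : t ≤ 1) :
    t * (1 - t) ^ m * (m + 1 : ℝ) ≤ 1 := by
  set u : ℝ := 1 - t with hu
  have hu0 : 0 ≤ u := by linarith
  have hu1 : u ≤ 1 := by linarith
  have hsum : (m + 1 : ℝ) * u ^ m ≤ ∑ i ∈ Finset.range (m + 1), u ^ i := by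
    have : (m + 1 : ℝ) * u ^ m = ∑ _i ∈ Finset.range (m + 1), u ^ m := by
      simp [Finset.sum_const, mul_comm]
    rw [this]
    refine Finset.sum_le_sum fun i hi => ?_
    exact pow_le_pow_of_le_one hu0 hu1 (Nat.lt_succ_iff.mp (Finset.mem_range.mp hi))
  have hgeom : (1 - u) * ∑ i ∈ Finset.range (m + 1), u ^ i = 1 - u ^ (m + 1) := by
    have h := geom_sum_mul u (m + 1)
    nlinarith [h]
  have hup : 0 ≤ u ^ (m + 1) := pow_nonneg hu0 _
  have ht : t = 1 - u := by linarith
  calc t * u ^ m * (m + 1 : ℝ) = (1 - u) * ((m + 1 : ℝ) * u ^ m) := by rw [ht]; ring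
    _ ≤ (1 - u) * ∑ i ∈ Finset.range (m + 1), u ^ i := by
        apply mul_le_mul_of_nonneg_left hsum (by linarith)
    _ = 1 - u ^ (m + 1) := hgeom
    _ ≤ 1 := by linarith

/-- Key per-term bound. -/
lemma term_bound (k : ℕ) {t : ℝ} (ht : |t| ≤ 1) :
    t * (t - 1) ^ (2 * k) ≤ 1 / (2 * k + 1) - max 0 (-t) := by
  have hk : (0 : ℝ) < 2 * k + 1 := by positivity
  obtain ⟨ht1, ht2⟩ := abs_le.mp ht
  rcases le_or_gt 0 t with h0 | h0
  · have hmax : max 0 (-t) = 0 := max_eq_left (by linarith)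
    rw [hmax, sub_zero]
    have hev : (t - 1) ^ (2 * k) = (1 - t) ^ (2 * k) := by
      rw [show (t - 1 : ℝ) = -(1 - t) by ring, Even.neg_pow (even_two_mul k)]
    rw [hev]
    have h := aux_t_bound (2 * k) h0 ht2
    rw [le_div_iff₀ hk]
    calc t * (1 - t) ^ (2 * k) * (2 * ↑k + 1) = t * (1 - t) ^ (2 * k) * (↑(2 * k) + 1) := by
          push_cast; ring
      _ ≤ 1 := h
  · have hmax : max 0 (-t) = -t := max_eq_right (by linarith)
    rw [hmax]
    have h1 : (1 : ℝ) ≤ (t - 1) ^ 2 := by nlinarith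
    have h2 : (1 : ℝ) ≤ (t - 1) ^ (2 * k) := by
      rw [pow_mul]
      exact one_le_pow₀ h1
    have h3 : t * (t - 1) ^ (2 * k) ≤ t := by nlinarith
    have h4 : (0 : ℝ) ≤ 1 / (2 * k + 1) := by positivity
    linarith

/-- Abstract compactness argument. -/
lemma key_compact {n s : ℕ} (F : ((Fin n → ℝ) × (Fin 2 → ℝ) × ℝ) → ℝ) (hFc : Continuous F)
    (G : Fin s → (Fin n → ℝ) → ℝ) (hGc : ∀ i, Continuous (G i))
    (hGbd : ∀ i, ∀ x ∈ simplexSet n, |G i x| ≤ 1)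
    (fstar : ℝ) (hfstar : 0 < fstar)
    (x₀ : Fin n → ℝ) (hx₀ : x₀ ∈ simplexSet n)
    (hge : ∀ x : Fin n → ℝ, (∀ i, 0 ≤ G i x) → ∀ (y : Fin 2 → ℝ) (z : ℝ),
      (∑ j, y j ^ 2) + z ^ 2 = 1 → fstar ≤ F (x, (y, z))) :
    ∃ lam > (0 : ℝ), ∃ k : ℕ,
      ∀ x ∈ simplexSet n, ∀ (y : Fin 2 → ℝ) (z : ℝ), (∑ j, y j ^ 2) + z ^ 2 = 1 →
        fstar / 2 ≤ F (x, (y, z)) - lam * ∑ i, G i x * (G i x - 1) ^ (2 * k) := by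
  classical
  set δ : (Fin n → ℝ) → ℝ := fun x => ∑ i, max 0 (-(G i x)) with hδ
  have hδc : Continuous δ := by
    rw [hδ]
    exact continuous_finset_sum _ fun i _ => continuous_const.max (hGc i).neg
  -- the compact set K = simplex × sphere
  set K : Set ((Fin n → ℝ) × (Fin 2 → ℝ) × ℝ) :=
    {p | p.1 ∈ simplexSet n ∧ (∑ j, p.2.1 j ^ 2) + p.2.2 ^ 2 = 1} with hK
  have hKclosed : IsClosed K := by
    have h1 : IsClosed {p : (Fin n → ℝ) × (Fin 2 → ℝ) × ℝ | p.1 ∈ simplexSet n} := by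
      have : {p : (Fin n → ℝ) × (Fin 2 → ℝ) × ℝ | p.1 ∈ simplexSet n} =
          (⋂ i, {p : (Fin n → ℝ) × (Fin 2 → ℝ) × ℝ | 0 ≤ p.1 i}) ∩
            {p : (Fin n → ℝ) × (Fin 2 → ℝ) × ℝ | ∑ i, p.1 i ≤ 1} := by
        ext p; simp [simplexSet, forall_and]
      rw [this]
      refine IsClosed.inter (isClosed_iInter fun i => ?_) ?_
      · exact isClosed_le continuous_const ((continuous_apply i).comp continuous_fst)
      · exact isClosed_le (continuous_finset_sum _ fun i _ =>
          (continuous_apply i).comp continuous_fst) continuous_const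
    have h2 : IsClosed {p : (Fin n → ℝ) × (Fin 2 → ℝ) × ℝ |
        (∑ j, p.2.1 j ^ 2) + p.2.2 ^ 2 = 1} := by
      refine isClosed_eq ?_ continuous_const
      exact Continuous.add (continuous_finset_sum _ fun j _ =>
        ((continuous_apply j).comp (continuous_fst.comp continuous_snd)).pow 2)
        ((continuous_snd.comp continuous_snd).pow 2)
    exact h1.inter h2
  have hcoord : ∀ x ∈ simplexSet n, ∀ i, x i ≤ 1 := by
    intro x hx i
    have h1 : x i ≤ ∑ j, x j :=
      Finset.single_le_sum (fun j _ => hx.1 j) (Finset.mem_univ i)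
    linarith [hx.2]
  have hKbd : Bornology.IsBounded K := by
    refine (Metric.isBounded_closedBall (x := (0 : (Fin n → ℝ) × (Fin 2 → ℝ) × ℝ))
      (r := 1)).subset ?_
    intro p hp
    have hyz : ∀ j, |p.2.1 j| ≤ 1 := by
      intro j
      have h1 : p.2.1 j ^ 2 ≤ 1 := by
        have := hp.2
        have h2 : ∀ j' ∈ Finset.univ, (0:ℝ) ≤ p.2.1 j' ^ 2 := fun j' _ => sq_nonneg _
        have h3 : p.2.1 j ^ 2 ≤ ∑ j', p.2.1 j' ^ 2 :=
          Finset.single_le_sum h2 (Finset.mem_univ j)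
        nlinarith [sq_nonneg p.2.2]
      rw [abs_le]; constructor <;> nlinarith
    have hz : |p.2.2| ≤ 1 := by
      have h1 : p.2.2 ^ 2 ≤ 1 := by
        have h2 : (0:ℝ) ≤ ∑ j', p.2.1 j' ^ 2 :=
          Finset.sum_nonneg fun j' _ => sq_nonneg _
        nlinarith [hp.2]
      rw [abs_le]; constructor <;> nlinarith
    simp only [Metric.mem_closedBall, dist_zero_right]
    rw [Prod.norm_def]
    refine max_le ?_ ?_
    · rw [pi_norm_le_iff_of_nonneg zero_le_one]
      intro i
      rw [Real.norm_eq_abs, abs_le]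
      exact ⟨by linarith [hp.1.1 i], hcoord p.1 hp.1 i⟩
    · rw [Prod.norm_def]
      refine max_le ?_ ?_
      · rw [pi_norm_le_iff_of_nonneg zero_le_one]
        intro j; rw [Real.norm_eq_abs]; exact hyz j
      · rw [Real.norm_eq_abs]; exact hz
  have hKcomp : IsCompact K := Metric.isCompact_of_isClosed_isBounded hKclosed hKbd
  have hKne : K.Nonempty := by
    refine ⟨(x₀, (fun _ => 0, 1)), hx₀, ?_⟩
    simp
  -- minimum of F on K
  obtain ⟨p₀, hp₀K, hp₀min⟩ := hKcomp.exists_isMinOn hKne hFc.continuousOn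
  set m : ℝ := F p₀ with hm
  have hmle : ∀ p ∈ K, m ≤ F p := fun p hp => hp₀min hp
  -- the "bad" compact set T
  set T : Set ((Fin n → ℝ) × (Fin 2 → ℝ) × ℝ) := K ∩ {p | F p ≤ 3 * fstar / 4} with hT
  have hTcomp : IsCompact T := hKcomp.inter_right (isClosed_le hFc continuous_const)
  have hδposT : ∀ p ∈ T, 0 < δ p.1 := by
    intro p hp
    have hxnotS : ¬ (∀ i, 0 ≤ G i p.1) := by
      intro hxS
      have h1 := hge p.1 hxS p.2.1 p.2.2 hp.1.2
      have h2 := hp.2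
      simp only [Set.mem_setOf_eq] at h2
      have h3 : F (p.1, (p.2.1, p.2.2)) = F p := by rfl
      rw [h3] at h1
      linarith
    push_neg at hxnotS
    obtain ⟨i, hi⟩ := hxnotS
    have hterm : 0 < max 0 (-(G i p.1)) := by
      rw [max_eq_right (by linarith)]; linarith
    rw [hδ]
    refine Finset.sum_pos' (fun j _ => le_max_left _ _) ⟨i, Finset.mem_univ i, hterm⟩
  have hδnn : ∀ x, 0 ≤ δ x := fun x =>
    Finset.sum_nonneg fun i _ => le_max_left _ _
  obtain ⟨δ₀, hδ₀pos, hδ₀⟩ : ∃ δ₀ > 0, ∀ p ∈ T, δ₀ ≤ δ p.1 := by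
    rcases T.eq_empty_or_nonempty with hTe | hTne
    · exact ⟨1, one_pos, fun p hp => by rw [hTe] at hp; exact absurd hp (Set.notMem_empty p)⟩
    · obtain ⟨q₀, hq₀T, hq₀min⟩ :=
        hTcomp.exists_isMinOn hTne ((hδc.comp continuous_fst).continuousOn)
      exact ⟨δ (q₀.1), hδposT q₀ hq₀T, fun p hp => hq₀min hp⟩
  set lam : ℝ := max 1 ((3 * fstar / 4 - m) / δ₀) with hlam
  have hlampos : (0 : ℝ) < lam := lt_of_lt_of_le one_pos (le_max_left _ _)
  have hlamδ : 3 * fstar / 4 - m ≤ lam * δ₀ := by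
    have h1 : (3 * fstar / 4 - m) / δ₀ ≤ lam := le_max_right _ _
    calc 3 * fstar / 4 - m = ((3 * fstar / 4 - m) / δ₀) * δ₀ := by
          rw [div_mul_cancel₀ _ (ne_of_gt hδ₀pos)]
      _ ≤ lam * δ₀ := mul_le_mul_of_nonneg_right h1 (le_of_lt hδ₀pos)
  -- choose k
  obtain ⟨k, hk⟩ : ∃ k : ℕ, lam * s / (2 * k + 1) ≤ fstar / 4 := by
    refine ⟨Nat.ceil (4 * lam * s / fstar), ?_⟩
    set k := Nat.ceil (4 * lam * s / fstar) with hkdef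
    have h1 : 4 * lam * s / fstar ≤ (k : ℝ) := Nat.le_ceil _
    have h2 : (0:ℝ) < 2 * k + 1 := by positivity
    rw [div_le_iff₀ h2]
    have h3 : (k : ℝ) ≤ 2 * k + 1 := by
      have : (0:ℝ) ≤ (k:ℝ) := Nat.cast_nonneg k
      linarith
    have h4 : 4 * lam * s ≤ fstar * (k : ℝ) := by
      rw [div_le_iff₀ hfstar] at h1; linarith [h1]
    have h5 : fstar * (k:ℝ) ≤ fstar * (2 * k + 1) := by
      exact mul_le_mul_of_nonneg_left h3 (le_of_lt hfstar)
    nlinarith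
  refine ⟨lam, hlampos, k, ?_⟩
  intro x hx y z hyz
  -- sum bound
  have hsumbd : (∑ i, G i x * (G i x - 1) ^ (2 * k)) ≤ s / (2 * k + 1) - δ x := by
    have h1 : ∀ i ∈ Finset.univ, G i x * (G i x - 1) ^ (2 * k) ≤
        1 / (2 * k + 1) - max 0 (-(G i x)) := fun i _ =>
      term_bound k (hGbd i x hx)
    calc (∑ i, G i x * (G i x - 1) ^ (2 * k))
        ≤ ∑ i : Fin s, (1 / (2 * k + 1) - max 0 (-(G i x))) :=
          Finset.sum_le_sum h1
      _ = s / (2 * k + 1) - δ x := by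
          rw [Finset.sum_sub_distrib, hδ]
          congr 1
          rw [Finset.sum_const, Finset.card_univ, Fintype.card_fin, nsmul_eq_mul]
          ring
  have hpK : ((x, (y, z)) : (Fin n → ℝ) × (Fin 2 → ℝ) × ℝ) ∈ K := ⟨hx, hyz⟩
  have hmF : m ≤ F (x, (y, z)) := hmle _ hpK
  have hkey : lam * (∑ i, G i x * (G i x - 1) ^ (2 * k)) ≤
      lam * (s / (2 * k + 1)) - lam * δ x := by
    have h := mul_le_mul_of_nonneg_left hsumbd (le_of_lt hlampos)
    have h2 : lam * (s / (2 * k + 1) - δ x) = lam * (s / (2 * k + 1)) - lam * δ x := by ring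
    linarith [h, h2.ge, h2.le]
  have hls : lam * (s / (2 * k + 1)) ≤ fstar / 4 := by
    have h : lam * (s / (2 * k + 1)) = lam * s / (2 * k + 1) := by ring
    rw [h]; exact hk
  rcases le_or_gt (F (x, (y, z))) (3 * fstar / 4) with hc | hc
  · -- bad case: use δ ≥ δ₀
    have hpT : ((x, (y, z)) : (Fin n → ℝ) × (Fin 2 → ℝ) × ℝ) ∈ T := ⟨hpK, hc⟩
    have h1 : δ₀ ≤ δ x := hδ₀ _ hpT
    have h2 : lam * δ₀ ≤ lam * δ x := mul_le_mul_of_nonneg_left h1 (le_of_lt hlampos)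
    linarith
  · -- good case: F is large
    have h1 : 0 ≤ lam * δ x := mul_nonneg (le_of_lt hlampos) (hδnn x)
    linarith

/-- under the hypotheses of Proposition `prop:main` (with `|gᵢ| ≤ 1` on `Δ̃_n`),
there exist `λ > 0` and `k ∈ ℕ₀` such that
`h = f̄ − λ(Y₁²+Y₂²+Z²)² Σᵢ gᵢ(gᵢ−1)^{2k}` satisfies `h ≥ f^•/2` on `Δ̃_n × C²`. -/
theorem stmt18 {n s : ℕ} (g : Fin s → MvPolynomial (Fin n) ℝ)
    (S : Set (Fin n → ℝ)) (hSdef : S = {x | ∀ i, 0 ≤ eval x (g i)})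
    (hSne : S.Nonempty)
    (hSsub : S ⊆ interior (simplexSet n))
    (harch : ∃ N : ℕ, InQM g (C (N : ℝ) - ∑ i, X i ^ 2))
    (hgbd : ∀ i, ∀ x ∈ simplexSet n, |eval x (g i)| ≤ 1)
    (f : MvPolynomial (Fin n ⊕ Fin 2) ℝ) (hdY : degY f = 4)
    (hpos : ∀ x ∈ S, ∀ y : Fin 2 → ℝ, 0 < eval (Sum.elim x y) f)
    (hdag : ∀ x ∈ S, ∀ y : Fin 2 → ℝ, y ≠ 0 → 0 < topYval f 4 x y)
    (fstar : ℝ) (hfstar : 0 < fstar)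
    (hge : ∀ x ∈ S, ∀ (y : Fin 2 → ℝ) (z : ℝ), (∑ j, y j ^ 2) + z ^ 2 = 1 →
      fstar ≤ homYval f 4 x y z)
    (hatt : ∃ x ∈ S, ∃ (y : Fin 2 → ℝ) (z : ℝ),
      (∑ j, y j ^ 2) + z ^ 2 = 1 ∧ homYval f 4 x y z = fstar) :
    ∃ lam > (0 : ℝ), ∃ k : ℕ,
      ∀ x ∈ simplexSet n, ∀ (y : Fin 2 → ℝ) (z : ℝ), (∑ j, y j ^ 2) + z ^ 2 = 1 →
        fstar / 2 ≤ homYval f 4 x y z -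
          lam * ((∑ j, y j ^ 2) + z ^ 2) ^ 2 *
            ∑ i, eval x (g i) * (eval x (g i) - 1) ^ (2 * k) := by
  classical
  obtain ⟨x₀, hx₀S⟩ := hSne
  have hx₀ : x₀ ∈ simplexSet n := interior_subset (hSsub hx₀S)
  have hFc : Continuous (fun p : (Fin n → ℝ) × (Fin 2 → ℝ) × ℝ =>
      homYval f 4 p.1 p.2.1 p.2.2) := by
    unfold homYval
    refine continuous_finset_sum _ fun c _ => ?_
    refine Continuous.mul (Continuous.mul (Continuous.mul continuous_const ?_) ?_) ?_
    · exact continuous_finset_prod _ fun i _ =>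
        ((continuous_apply i).comp continuous_fst).pow _
    · exact continuous_finset_prod _ fun j _ =>
        ((continuous_apply j).comp (continuous_fst.comp continuous_snd)).pow _
    · exact (continuous_snd.comp continuous_snd).pow _
  obtain ⟨lam, hlampos, k, hmain⟩ :=
    key_compact (fun p : (Fin n → ℝ) × (Fin 2 → ℝ) × ℝ => homYval f 4 p.1 p.2.1 p.2.2)
      hFc (fun i x => eval x (g i)) (fun i => MvPolynomial.continuous_eval (g i))
      hgbd fstar hfstar x₀ hx₀
      (by
        intro x hxG y z hyz
        have hxS : x ∈ S := by rw [hSdef]; exact hxG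
        exact hge x hxS y z hyz)
  refine ⟨lam, hlampos, k, ?_⟩
  intro x hx y z hyz
  have h := hmain x hx y z hyz
  rw [hyz, one_pow, mul_one]
  exact h
end
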